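/- arXiv:1406.5461 — 4 statements merged into one kernel-verified Lean document; each statement's English description precedes it below -/
import Mathlib

section
/- Assume the coexistence condition (ss): r_n/(1+Q_n) > 1. Then the point E† = (B†, P†) defined by B_j† = B_j* for 1 ≤ j < n, B_n† = B_n* + (1 − (1+Q_n)/r_n), P_j† = P_j* · (1+Q_n)/r_n for 1 ≤ j < n, and P_n† = 0, is an equilibrium of (LV), has all components strictly positive except P_n† = 0, and is the unique equilibrium of (LV) whose components are all strictly positive except that P_n = 0. -/
open Filter

noncomputable def lvQ (r s : ℕ → ℝ) (k : ℕ) : ℝ :=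
  (∑ i ∈ Finset.Icc 1 (k - 1), s i * (r i - r (i + 1))) + s k * r k

noncomputable def lvBstar (s : ℕ → ℝ) (j : ℕ) : ℝ :=
  if j = 1 then s 1 else s j - s (j - 1)

noncomputable def lvPstar (n : ℕ) (r s : ℕ → ℝ) (j : ℕ) : ℝ :=
  if j = n then r n / (1 + lvQ r s n) - 1 else (r j - r (j + 1)) / (1 + lvQ r s n)

noncomputable def lvBdag (n : ℕ) (r s : ℕ → ℝ) (j : ℕ) : ℝ :=
  if j = n then lvBstar s n + (1 - (1 + lvQ r s n) / r n) else lvBstar s j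

noncomputable def lvPdag (n : ℕ) (r s : ℕ → ℝ) (j : ℕ) : ℝ :=
  if j = n then 0 else lvPstar n r s j * ((1 + lvQ r s n) / r n)

def IsEquilibLV (n : ℕ) (r s : ℕ → ℝ) (B P : ℕ → ℝ) : Prop :=
  (∀ i ∈ Finset.Icc 1 n,
      r i * B i * (1 - 1 / r i - ∑ j ∈ Finset.Icc 1 n, (B j + s j * P j))
        - B i * ∑ j ∈ Finset.Icc i n, P j = 0) ∧
  (∀ i ∈ Finset.Icc 1 n, (s i)⁻¹ * P i * ((∑ j ∈ Finset.Icc 1 i, B j) - s i) = 0)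

/-!
At an equilibrium with `B_i > 0` for all `i` and `P_i > 0` for `i < n`, the factors `B_i` and
`P_i` cancel from the equations and leave a triangular linear system: the `P`-equations fix the
partial sums `B_1 + ⋯ + B_k = s_k` for `k < n`, and the `B`-equations fix the tail sums
`P_i + ⋯ + P_n = r_i (1 - T) - 1`, where `T = Σ_j (B_j + s_j P_j)`. Since `P_n = 0`, the last of
these forces `T = 1 - 1/r_n`; this determines every tail sum of `P`, hence `P`, and then `B_n`
through `Σ_j B_j = T - Σ_j s_j P_j`. So the system has at most one solution, `E†` is one, and
condition (ss) is what makes `1 + Q_n > 0` and `B_n† > 0`.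
-/
open Finset

namespace Finset

variable {M : Type*} [AddCancelCommMonoid M] {f g : ℕ → M} {a n : ℕ}

theorem eqOn_Icc_of_sum_Icc_left_eq
    (h : ∀ k ∈ Icc a n, ∑ j ∈ Icc a k, f j = ∑ j ∈ Icc a k, g j) :
    ∀ i ∈ Icc a n, f i = g i := by
  intro i hi
  obtain ⟨hai, hin⟩ := mem_Icc.mp hi
  obtain rfl | hlt := hai.eq_or_lt
  · simpa using h a hi
  · obtain ⟨k, rfl⟩ : ∃ k, i = k + 1 := ⟨i - 1, by omega⟩
    have hk := h (k + 1) hi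
    rw [sum_Icc_succ_top hai, sum_Icc_succ_top hai,
      h k (mem_Icc.mpr ⟨by omega, by omega⟩)] at hk
    exact add_left_cancel hk

theorem eqOn_Icc_of_sum_Icc_right_eq
    (h : ∀ k ∈ Icc a n, ∑ j ∈ Icc k n, f j = ∑ j ∈ Icc k n, g j) :
    ∀ i ∈ Icc a n, f i = g i := by
  intro i hi
  obtain ⟨hai, hin⟩ := mem_Icc.mp hi
  have hi' := h i hi
  rw [Icc_eq_cons_Ioc hin, sum_cons, sum_cons] at hi'
  obtain rfl | hlt := hin.eq_or_lt
  · simpa using hi'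
  · rw [← Icc_add_one_left_eq_Ioc, h (i + 1) (mem_Icc.mpr ⟨by omega, hlt⟩)] at hi'
    exact add_right_cancel hi'

end Finset

section Equations

variable {n : ℕ} {r s : ℕ → ℝ}

/-- The equilibrium equations of (LV) with the factors `B i` (`i ≤ n`) and `P i` (`i < n`)
cancelled. -/
def LVReducedEqns (n : ℕ) (r s B P : ℕ → ℝ) : Prop :=
  (∀ i ∈ Icc 1 n,
    r i * (1 - 1 / r i - ∑ j ∈ Icc 1 n, (B j + s j * P j)) = ∑ j ∈ Icc i n, P j) ∧
  ∀ k ∈ Ico 1 n, ∑ j ∈ Icc 1 k, B j = s k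

theorem isEquilibLV_iff_lvReducedEqns {B P : ℕ → ℝ} (hs : ∀ i ∈ Ico 1 n, s i ≠ 0)
    (hB : ∀ i ∈ Icc 1 n, B i ≠ 0) (hP : ∀ i ∈ Ico 1 n, P i ≠ 0) (hPn : P n = 0) :
    IsEquilibLV n r s B P ↔ LVReducedEqns n r s B P := by
  have cancel (a b x y : ℝ) (hb : b ≠ 0) : a * b * x - b * y = 0 ↔ a * x = y := by
    rw [show a * b * x - b * y = b * (a * x - y) by ring, mul_eq_zero, or_iff_right hb,
      sub_eq_zero]
  refine and_congr (forall₂_congr fun i hi => cancel _ _ _ _ (hB i hi))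
    ⟨fun h k hk => ?_, fun h i hi => ?_⟩
  · simpa [hs k hk, hP k hk, sub_eq_zero] using h k (Ico_subset_Icc_self hk)
  · obtain rfl | hin := eq_or_ne i n
    · simp [hPn]
    · simp [h i (mem_Ico.mpr ⟨(mem_Icc.mp hi).1, (mem_Icc.mp hi).2.lt_of_ne hin⟩)]

theorem LVReducedEqns.eqOn {B P B' P' : ℕ → ℝ} (h : LVReducedEqns n r s B P)
    (h' : LVReducedEqns n r s B' P') (hrn : r n ≠ 0) (hPn : P n = 0) (hPn' : P' n = 0) :
    ∀ i ∈ Icc 1 n, B i = B' i ∧ P i = P' i := by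
  intro i hi
  have hn : n ∈ Icc 1 n := mem_Icc.mpr ⟨(mem_Icc.mp hi).1.trans (mem_Icc.mp hi).2, le_rfl⟩
  have total {B P : ℕ → ℝ} (h : LVReducedEqns n r s B P) (hPn : P n = 0) :
      ∑ j ∈ Icc 1 n, (B j + s j * P j) = 1 - 1 / r n := by
    have := h.1 n hn
    rw [Icc_self, sum_singleton, hPn, mul_eq_zero, or_iff_right hrn] at this
    linarith
  have hP : ∀ i ∈ Icc 1 n, P i = P' i := eqOn_Icc_of_sum_Icc_right_eq fun k hk => by
    rw [← h.1 k hk, ← h'.1 k hk, total h hPn, total h' hPn']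
  have hB : ∀ i ∈ Icc 1 n, B i = B' i := eqOn_Icc_of_sum_Icc_left_eq fun k hk => by
    obtain hlt | rfl := (mem_Icc.mp hk).2.lt_or_eq
    · have hk' : k ∈ Ico 1 n := mem_Ico.mpr ⟨(mem_Icc.mp hk).1, hlt⟩
      rw [h.2 k hk', h'.2 k hk']
    · have hsP : ∑ j ∈ Icc 1 k, s j * P j = ∑ j ∈ Icc 1 k, s j * P' j :=
        sum_congr rfl fun j hj => by rw [hP j hj]
      have := (total h hPn).trans (total h' hPn').symm
      rw [sum_add_distrib, sum_add_distrib, hsP] at this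
      exact add_right_cancel this
  exact ⟨hB i hi, hP i hi⟩

end Equations

section Dagger

variable {n : ℕ} {r s : ℕ → ℝ}

theorem sum_Icc_lvBstar (s : ℕ → ℝ) {k : ℕ} (hk : 1 ≤ k) :
    ∑ j ∈ Icc 1 k, lvBstar s j = s k := by
  induction k, hk using Nat.le_induction with
  | base => simp [lvBstar]
  | succ k hk ih =>
    rw [sum_Icc_succ_top (by omega), ih, lvBstar, if_neg (by omega), Nat.add_sub_cancel]
    ring

theorem lvBstar_pos (hs1 : 0 < s 1) (hs : StrictMonoOn s (Set.Icc 1 n)) {j : ℕ}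
    (hj : j ∈ Icc 1 n) : 0 < lvBstar s j := by
  obtain ⟨hj1, hjn⟩ := mem_Icc.mp hj
  unfold lvBstar
  split_ifs with h
  · exact hs1
  · have := hs ⟨by omega, by omega⟩ ⟨hj1, hjn⟩ (by omega : j - 1 < j)
    linarith

theorem lvBdag_self : lvBdag n r s n = lvBstar s n + (1 - (1 + lvQ r s n) / r n) := if_pos rfl

theorem lvBdag_of_ne {j : ℕ} (hj : j ≠ n) : lvBdag n r s j = lvBstar s j := if_neg hj

theorem lvPdag_self : lvPdag n r s n = 0 := if_pos rfl

theorem lvPdag_of_ne (hQ : 1 + lvQ r s n ≠ 0) (hrn : r n ≠ 0) {j : ℕ} (hj : j ≠ n) :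
    lvPdag n r s j = (r j - r (j + 1)) / r n := by
  rw [lvPdag, if_neg hj, lvPstar, if_neg hj]
  field_simp

theorem sum_Icc_lvBdag_of_lt {k : ℕ} (hk : k ∈ Ico 1 n) :
    ∑ j ∈ Icc 1 k, lvBdag n r s j = s k := by
  obtain ⟨hk1, hkn⟩ := mem_Ico.mp hk
  rw [← sum_Icc_lvBstar s hk1]
  exact sum_congr rfl fun j hj => lvBdag_of_ne (by have := (mem_Icc.mp hj).2; omega)

theorem sum_Icc_lvBdag (hn : 1 ≤ n) :
    ∑ j ∈ Icc 1 n, lvBdag n r s j = s n + (1 - (1 + lvQ r s n) / r n) := by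
  have h := sum_Icc_lvBstar s hn
  rw [Icc_eq_cons_Ico hn, sum_cons] at h ⊢
  rw [lvBdag_self, sum_congr rfl fun j hj => lvBdag_of_ne (mem_Ico.mp hj).2.ne]
  linarith

theorem sum_Icc_mul_lvPdag (hn : 1 ≤ n) (hQ : 1 + lvQ r s n ≠ 0) (hrn : r n ≠ 0) :
    ∑ j ∈ Icc 1 n, s j * lvPdag n r s j = (lvQ r s n - s n * r n) / r n := by
  have hn_min : ¬IsMin n := by simpa using Nat.one_le_iff_ne_zero.mp hn
  rw [Icc_eq_cons_Ico hn, sum_cons, lvPdag_self, mul_zero, zero_add,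
    sum_congr rfl fun j hj => by rw [lvPdag_of_ne hQ hrn (mem_Ico.mp hj).2.ne, mul_div_assoc'],
    ← sum_div, lvQ, Icc_sub_one_right_eq_Ico_of_not_isMin hn_min, add_sub_cancel_right]

theorem sum_Icc_lvPdag (hQ : 1 + lvQ r s n ≠ 0) (hrn : r n ≠ 0) {i : ℕ} (hin : i ≤ n) :
    ∑ j ∈ Icc i n, lvPdag n r s j = (r i - r n) / r n := by
  have telescope := sum_Ico_sub (-r) hin
  simp only [Pi.neg_apply, neg_sub_neg] at telescope
  rw [Icc_eq_cons_Ico hin, sum_cons, lvPdag_self, zero_add,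
    sum_congr rfl fun j hj => lvPdag_of_ne hQ hrn (mem_Ico.mp hj).2.ne, ← sum_div, telescope]

theorem lvBdag_pos (hs1 : 0 < s 1) (hs : StrictMonoOn s (Set.Icc 1 n))
    (hQr : (1 + lvQ r s n) / r n < 1) : ∀ i ∈ Icc 1 n, 0 < lvBdag n r s i := by
  intro i hi
  obtain rfl | hin := eq_or_ne i n
  · rw [lvBdag_self]
    linarith [lvBstar_pos hs1 hs hi]
  · rw [lvBdag_of_ne hin]
    exact lvBstar_pos hs1 hs hi

theorem lvPdag_pos (hr : StrictAntiOn r (Set.Icc 1 n)) (hrn : 0 < r n) (hQ : 1 + lvQ r s n ≠ 0) :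
    ∀ i ∈ Icc 1 n, i ≠ n → 0 < lvPdag n r s i := by
  intro i hi hin
  obtain ⟨hi1, hin'⟩ := mem_Icc.mp hi
  rw [lvPdag_of_ne hQ hrn.ne' hin]
  exact div_pos (sub_pos.mpr (hr ⟨hi1, hin'⟩ ⟨by omega, by omega⟩ (by omega))) hrn

theorem lvReducedEqns_lvBdag_lvPdag (hr : ∀ i ∈ Icc 1 n, r i ≠ 0) (hQ : 1 + lvQ r s n ≠ 0) :
    LVReducedEqns n r s (lvBdag n r s) (lvPdag n r s) := by
  refine ⟨fun i hi => ?_, fun k hk => sum_Icc_lvBdag_of_lt hk⟩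
  obtain ⟨hi1, hin⟩ := mem_Icc.mp hi
  have hrn := hr n (mem_Icc.mpr ⟨hi1.trans hin, le_rfl⟩)
  rw [sum_add_distrib, sum_Icc_lvBdag (hi1.trans hin), sum_Icc_mul_lvPdag (hi1.trans hin) hQ hrn,
    sum_Icc_lvPdag hQ hrn hin]
  field_simp [hr i hi]
  ring

end Dagger

theorem stmt2_general
    (n : ℕ) (r s : ℕ → ℝ)
    (hr : ∀ i, 1 ≤ i → i < n → r (i + 1) < r i) (hrn : 1 < r n)
    (hs1 : 0 < s 1) (hs : ∀ i, 1 ≤ i → i < n → s i < s (i + 1))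
    (hss : 1 < r n / (1 + lvQ r s n)) :
    IsEquilibLV n r s (lvBdag n r s) (lvPdag n r s) ∧
    (∀ i ∈ Finset.Icc 1 n, 0 < lvBdag n r s i) ∧
    (∀ i ∈ Finset.Icc 1 n, i ≠ n → 0 < lvPdag n r s i) ∧
    lvPdag n r s n = 0 ∧
    (∀ B P : ℕ → ℝ,
      (∀ i ∈ Finset.Icc 1 n, 0 < B i) →
      (∀ i ∈ Finset.Icc 1 n, i ≠ n → 0 < P i) →
      P n = 0 →
      IsEquilibLV n r s B P →
      ∀ i ∈ Finset.Icc 1 n, B i = lvBdag n r s i ∧ P i = lvPdag n r s i) := by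
  have hr_anti : StrictAntiOn r (Set.Icc 1 n) :=
    strictAntiOn_of_add_one_lt Set.ordConnected_Icc fun i _ hi hi1 => hr i hi.1 hi1.2
  have hs_mono : StrictMonoOn s (Set.Icc 1 n) :=
    strictMonoOn_of_lt_add_one Set.ordConnected_Icc fun i _ hi hi1 => hs i hi.1 hi1.2
  have hr_pos : ∀ i ∈ Icc 1 n, 0 < r i := fun i hi => by
    obtain ⟨hi1, hin⟩ := mem_Icc.mp hi
    linarith [hr_anti.antitoneOn ⟨hi1, hin⟩ ⟨hi1.trans hin, le_rfl⟩ hin]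
  have hs_ne : ∀ i ∈ Ico 1 n, s i ≠ 0 := fun i hi => by
    obtain ⟨hi1, hin⟩ := mem_Ico.mp hi
    exact (hs1.trans_le (hs_mono.monotoneOn ⟨le_rfl, hi1.trans hin.le⟩ ⟨hi1, hin.le⟩ hi1)).ne'
  obtain ⟨hQ, hQr⟩ : 0 < 1 + lvQ r s n ∧ 1 + lvQ r s n < r n :=
    (one_lt_div_iff.mp hss).resolve_right fun h => by linarith [h.1, h.2]
  have hBdag := lvBdag_pos hs1 hs_mono ((div_lt_one (by linarith)).mpr hQr)
  have hPdag := lvPdag_pos hr_anti (by linarith) hQ.ne'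
  have hreduced (B P : ℕ → ℝ) (hB : ∀ i ∈ Icc 1 n, 0 < B i)
      (hP : ∀ i ∈ Icc 1 n, i ≠ n → 0 < P i) (hPn : P n = 0) :
      IsEquilibLV n r s B P ↔ LVReducedEqns n r s B P :=
    isEquilibLV_iff_lvReducedEqns hs_ne (fun i hi => (hB i hi).ne')
      (fun i hi => (hP i (Ico_subset_Icc_self hi) (mem_Ico.mp hi).2.ne).ne') hPn
  have hdag := lvReducedEqns_lvBdag_lvPdag (fun i hi => (hr_pos i hi).ne') hQ.ne'
  refine ⟨(hreduced _ _ hBdag hPdag lvPdag_self).2 hdag, hBdag, hPdag, lvPdag_self,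
    fun B P hB hP hPn hE => ?_⟩
  exact ((hreduced B P hB hP hPn).1 hE).eqOn hdag (by linarith) hPn lvPdag_self

theorem stmt2
    (n : ℕ) (hn : 1 ≤ n) (r s : ℕ → ℝ)
    (hr : ∀ i, 1 ≤ i → i < n → r (i + 1) < r i) (hrn : 1 < r n)
    (hs1 : 0 < s 1) (hs : ∀ i, 1 ≤ i → i < n → s i < s (i + 1))
    (hss : 1 < r n / (1 + lvQ r s n)) :
    IsEquilibLV n r s (lvBdag n r s) (lvPdag n r s) ∧
    (∀ i ∈ Finset.Icc 1 n, 0 < lvBdag n r s i) ∧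
    (∀ i ∈ Finset.Icc 1 n, i ≠ n → 0 < lvPdag n r s i) ∧
    lvPdag n r s n = 0 ∧
    (∀ B P : ℕ → ℝ,
      (∀ i ∈ Finset.Icc 1 n, 0 < B i) →
      (∀ i ∈ Finset.Icc 1 n, i ≠ n → 0 < P i) →
      P n = 0 →
      IsEquilibLV n r s B P →
      ∀ i ∈ Finset.Icc 1 n, B i = lvBdag n r s i ∧ P i = lvPdag n r s i) :=
  stmt2_general n r s hr hrn hs1 hs hss
end

section
/- Assume the coexistence condition (ss): r_n/(1+Q_n) > 1. Then s_1 < 1 − 1/r_1 and s_i − s_{i−1} < 1 − 1/r_i for every 1 < i ≤ n; that is, each component B_i* of the positive equilibrium is strictly smaller than the single-species equilibrium density 1 − 1/r_i. Moreover P_j† < P_j* for 1 ≤ j < n, and B_n† > B_n*. -/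
/-!
Summation by parts rewrites `Q_n` as `∑ B_i* r_i`, a sum of positive terms, so each
`B_i* r_i < 1 + Q_n < r_n ≤ r_i`, which is `B_i* < 1 - 1/r_i`. Condition (ss) also says that the
factor `(1 + Q_n)/r_n` relating `E†` to `E*` lies in `(0, 1)`; this gives the two remaining
inequalities.
-/

open Filter

lemma le_of_forall_succ_lt {α : Type*} [Preorder α] {f : ℕ → α} {a b : ℕ}
    (hf : ∀ k, a ≤ k → k < b → f (k + 1) < f k) (hab : a ≤ b) : f b ≤ f a := by
  induction b, hab using Nat.le_induction with
  | base => exact le_rfl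
  | succ k hak ih =>
    exact (hf k hak k.lt_succ_self).le.trans (ih fun j hj hjk => hf j hj (hjk.trans k.lt_succ_self))

lemma pos_and_lt_of_one_lt_div {a b : ℝ} (ha : 0 ≤ a) (h : 1 < a / b) : 0 < b ∧ b < a := by
  rcases one_lt_div_iff.mp h with hb | ⟨hb, hab⟩
  · exact hb
  · linarith

lemma lvQ_succ (r s : ℕ → ℝ) {k : ℕ} (hk : 1 ≤ k) :
    lvQ r s (k + 1) = lvQ r s k + lvBstar s (k + 1) * r (k + 1) := by
  obtain ⟨m, rfl⟩ := Nat.exists_eq_add_of_le' hk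
  simp only [lvQ, lvBstar, Nat.add_sub_cancel, Finset.sum_Icc_succ_top (by omega : 1 ≤ m + 1),
    if_neg (by omega : m + 1 + 1 ≠ 1)]
  ring

lemma lvQ_eq_sum_lvBstar_mul (r s : ℕ → ℝ) {n : ℕ} (hn : 1 ≤ n) :
    lvQ r s n = ∑ i ∈ Finset.Icc 1 n, lvBstar s i * r i := by
  induction n, hn using Nat.le_induction with
  | base => simp [lvQ, lvBstar]
  | succ k hk ih => rw [lvQ_succ r s hk, Finset.sum_Icc_succ_top (by omega), ih]

lemma lvBstar_pos_s6 {s : ℕ → ℝ} {n : ℕ} (hs1 : 0 < s 1)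
    (hs : ∀ i, 1 ≤ i → i < n → s i < s (i + 1)) {i : ℕ} (hi : i ∈ Finset.Icc 1 n) :
    0 < lvBstar s i := by
  obtain ⟨hi1, hin⟩ := Finset.mem_Icc.mp hi
  unfold lvBstar
  split_ifs with h
  · exact hs1
  · obtain ⟨k, rfl⟩ : ∃ k, i = k + 1 + 1 := ⟨i - 2, by omega⟩
    simpa using hs (k + 1) (by omega) (by omega)

lemma lvBstar_lt_one_sub_inv {n : ℕ} {r s : ℕ → ℝ}
    (hr : ∀ i, 1 ≤ i → i < n → r (i + 1) < r i) (hrn : 1 < r n)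
    (hs1 : 0 < s 1) (hs : ∀ i, 1 ≤ i → i < n → s i < s (i + 1))
    (hQ : 1 + lvQ r s n < r n) {i : ℕ} (hi : i ∈ Finset.Icc 1 n) :
    lvBstar s i < 1 - 1 / r i := by
  have hrn_le {j : ℕ} (hj : j ∈ Finset.Icc 1 n) : r n ≤ r j := by
    obtain ⟨hj1, hjn⟩ := Finset.mem_Icc.mp hj
    exact le_of_forall_succ_lt (fun k hjk hkn => hr k (hj1.trans hjk) hkn) hjn
  have hri : 0 < r i := by linarith [hrn_le hi]
  have hle : lvBstar s i * r i ≤ lvQ r s n := by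
    obtain ⟨hi1, hin⟩ := Finset.mem_Icc.mp hi
    rw [lvQ_eq_sum_lvBstar_mul r s (hi1.trans hin)]
    exact Finset.single_le_sum
      (fun j hj => (mul_pos (lvBstar_pos_s6 hs1 hs hj) (by linarith [hrn_le hj])).le) hi
  rw [one_sub_div hri.ne', lt_div_iff₀ hri]
  linarith [hrn_le hi]

theorem stmt6
    (n : ℕ) (hn : 1 ≤ n) (r s : ℕ → ℝ)
    (hr : ∀ i, 1 ≤ i → i < n → r (i + 1) < r i) (hrn : 1 < r n)
    (hs1 : 0 < s 1) (hs : ∀ i, 1 ≤ i → i < n → s i < s (i + 1))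
    (hss : 1 < r n / (1 + lvQ r s n)) :
    s 1 < 1 - 1 / r 1 ∧
    (∀ i, 1 < i → i ≤ n → s i - s (i - 1) < 1 - 1 / r i) ∧
    (∀ i ∈ Finset.Icc 1 n, lvBstar s i < 1 - 1 / r i) ∧
    (∀ j, 1 ≤ j → j < n → lvPdag n r s j < lvPstar n r s j) ∧
    lvBstar s n < lvBdag n r s n := by
  obtain ⟨hQ_pos, hQ⟩ := pos_and_lt_of_one_lt_div (by linarith) hss
  have hfactor : (1 + lvQ r s n) / r n < 1 := (div_lt_one (by linarith)).mpr hQ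
  have hB := fun i => lvBstar_lt_one_sub_inv (i := i) hr hrn hs1 hs hQ
  refine ⟨?_, fun i hi1 hin => ?_, hB, fun j hj1 hjn => ?_, ?_⟩
  · simpa [lvBstar] using hB 1 (Finset.mem_Icc.mpr ⟨le_rfl, hn⟩)
  · simpa [lvBstar, hi1.ne'] using hB i (Finset.mem_Icc.mpr ⟨hi1.le, hin⟩)
  · have hP_pos : 0 < lvPstar n r s j := by
      simpa [lvPstar, hjn.ne] using div_pos (sub_pos.mpr (hr j hj1 hjn)) hQ_pos
    simpa [lvPdag, hjn.ne] using mul_lt_of_lt_one_right hP_pos hfactor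
  · rw [lvBdag, if_pos rfl]
    linarith
end

section
/- (Competitive exclusion among bacteria.) Let (B,P) be a solution of (LV) in Ω and let 1 ≤ i < j ≤ n. If B_i(0) > 0, B_j(0) > 0, and P_k(0) = 0 for all i ≤ k < j, then B_j(t) → 0 as t → ∞. -/
/-!
Each `P k` and `B k` solves a scalar linear equation `x' = c(t) x` with `c` continuous, so it
vanishes identically as soon as it vanishes at one time: hence `P k ≡ 0` for `i ≤ k < j`, and
`B i`, `B j` stay positive. Then `L = r j * log (B i) - r i * log (B j)` satisfies
`L' = (r i - r j) * (1 + ∑_{k ≥ j} P k) ≥ r i - r j > 0`: the logistic terms cancel, and the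
phages `P i, …, P (j-1)` that would attack `B i` but not `B j` are absent. As `B i ≤ 1`, this
gives `log (B j t) ≤ -(L 0 + (r i - r j) t) / r i → -∞`.
-/

open Filter

def IsSolutionLV (n : ℕ) (r s : ℕ → ℝ) (B P : ℕ → ℝ → ℝ) : Prop :=
  (∀ i ∈ Finset.Icc 1 n, ∀ t : ℝ, 0 ≤ t →
      HasDerivAt (B i)
        (r i * B i t * (1 - 1 / r i - ∑ j ∈ Finset.Icc 1 n, (B j t + s j * P j t))
          - B i t * ∑ j ∈ Finset.Icc i n, P j t) t) ∧
  (∀ i ∈ Finset.Icc 1 n, ∀ t : ℝ, 0 ≤ t →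
      HasDerivAt (P i) ((s i)⁻¹ * P i t * ((∑ j ∈ Finset.Icc 1 i, B j t) - s i)) t) ∧
  (∀ t : ℝ, 0 ≤ t → (∀ i ∈ Finset.Icc 1 n, 0 ≤ B i t ∧ 0 ≤ P i t) ∧
      (∑ i ∈ Finset.Icc 1 n, (B i t + s i * P i t)) ≤ 1)

open Set Topology

theorem strictMonoOn_Icc_of_lt_add_one {α : Type*} [Preorder α] {f : ℕ → α} {a b : ℕ}
    (hf : ∀ k, a ≤ k → k < b → f k < f (k + 1)) : StrictMonoOn f (Icc a b) :=
  strictMonoOn_of_lt_succ ordConnected_Icc fun k _ hk hk' => hf k hk.1 (Nat.succ_le_iff.1 hk'.2)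

theorem strictAntiOn_Icc_of_add_one_lt {α : Type*} [Preorder α] {f : ℕ → α} {a b : ℕ}
    (hf : ∀ k, a ≤ k → k < b → f (k + 1) < f k) : StrictAntiOn f (Icc a b) :=
  strictAntiOn_of_succ_lt ordConnected_Icc fun k _ hk hk' => hf k hk.1 (Nat.succ_le_iff.1 hk'.2)

section LinearODE

variable {E : Type*} [NormedAddCommGroup E] [NormedSpace ℝ E]

theorem eqOn_zero_of_hasDerivAt_smul {f : ℝ → E} {c : ℝ → ℝ} {a b t₀ : ℝ}
    (hc : ContinuousOn c (Icc a b)) (hf : ∀ t ∈ Icc a b, HasDerivAt f (c t • f t) t)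
    (ht₀ : t₀ ∈ Icc a b) (hft₀ : f t₀ = 0) : EqOn f 0 (Icc a b) := by
  obtain ⟨K, hK⟩ := isCompact_Icc.exists_bound_of_continuousOn hc
  have hlip : ∀ t ∈ Icc a b, LipschitzOnWith K.toNNReal (fun x : E => c t • x) univ := by
    intro t ht
    refine ((lipschitzWith_smul (c t)).weaken ?_).lipschitzOnWith
    rw [← NNReal.coe_le_coe, coe_nnnorm, Real.coe_toNNReal']
    exact (hK t ht).trans (le_max_left _ _)
  have hf_cont : ContinuousOn f (Icc a b) := HasDerivAt.continuousOn hf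
  have hzero : ∀ t, HasDerivWithinAt (0 : ℝ → E) (c t • (0 : ℝ → E) t) univ t := by simp
  rw [← Icc_union_Icc_eq_Icc ht₀.1 ht₀.2]
  refine EqOn.union ?_ ?_
  · exact ODE_solution_unique_of_mem_Icc_left (s := fun _ => univ)
      (fun t ht => hlip t ⟨ht.1.le, ht.2.trans ht₀.2⟩)
      (hf_cont.mono (Icc_subset_Icc_right ht₀.2))
      (fun t ht => (hf t ⟨ht.1.le, ht.2.trans ht₀.2⟩).hasDerivWithinAt)
      (fun _ _ => mem_univ _) continuousOn_const
      (fun t _ => (hzero t).mono (subset_univ _)) (fun _ _ => mem_univ _) hft₀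
  · exact ODE_solution_unique_of_mem_Icc_right (s := fun _ => univ)
      (fun t ht => hlip t ⟨ht₀.1.trans ht.1, ht.2.le⟩)
      (hf_cont.mono (Icc_subset_Icc_left ht₀.1))
      (fun t ht => (hf t ⟨ht₀.1.trans ht.1, ht.2.le⟩).hasDerivWithinAt)
      (fun _ _ => mem_univ _) continuousOn_const
      (fun t _ => (hzero t).mono (subset_univ _)) (fun _ _ => mem_univ _) hft₀

theorem eq_zero_of_hasDerivAt_smul {f : ℝ → E} {c : ℝ → ℝ} (hc : ContinuousOn c (Ici 0))
    (hf : ∀ t, 0 ≤ t → HasDerivAt f (c t • f t) t) {t₀ t : ℝ} (ht₀ : 0 ≤ t₀)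
    (ht : 0 ≤ t) (hft₀ : f t₀ = 0) : f t = 0 :=
  eqOn_zero_of_hasDerivAt_smul (hc.mono Icc_subset_Ici_self) (fun u hu => hf u hu.1)
    ⟨ht₀, le_max_left t₀ t⟩ hft₀ ⟨ht, le_max_right t₀ t⟩

end LinearODE

namespace IsSolutionLV

open Real

variable {n : ℕ} {r s : ℕ → ℝ} {B P : ℕ → ℝ → ℝ}

theorem continuousOn_B (h : IsSolutionLV n r s B P) {k : ℕ} (hk : k ∈ Finset.Icc 1 n) :
    ContinuousOn (B k) (Ici 0) :=
  HasDerivAt.continuousOn fun t ht => h.1 k hk t ht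

theorem continuousOn_P (h : IsSolutionLV n r s B P) {k : ℕ} (hk : k ∈ Finset.Icc 1 n) :
    ContinuousOn (P k) (Ici 0) :=
  HasDerivAt.continuousOn fun t ht => h.2.1 k hk t ht

theorem P_eq_zero (h : IsSolutionLV n r s B P) {k : ℕ} (hk : k ∈ Finset.Icc 1 n)
    (h0 : P k 0 = 0) {t : ℝ} (ht : 0 ≤ t) : P k t = 0 := by
  have hsub : Finset.Icc 1 k ⊆ Finset.Icc 1 n :=
    Finset.Icc_subset_Icc_right (Finset.mem_Icc.1 hk).2
  refine eq_zero_of_hasDerivAt_smul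
    (c := fun t => (s k)⁻¹ * ((∑ m ∈ Finset.Icc 1 k, B m t) - s k)) ?_ (fun u hu => ?_) le_rfl ht h0
  · exact continuousOn_const.mul
      ((continuousOn_finsetSum _ fun m hm => h.continuousOn_B (hsub hm)).sub continuousOn_const)
  · exact (h.2.1 k hk u hu).congr_deriv (by rw [smul_eq_mul]; ring)

theorem B_pos (h : IsSolutionLV n r s B P) {k : ℕ} (hk : k ∈ Finset.Icc 1 n)
    (h0 : 0 < B k 0) {t : ℝ} (ht : 0 ≤ t) : 0 < B k t := by
  refine ((h.2.2 t ht).1 k hk).1.lt_of_ne' fun hBt => h0.ne' ?_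
  have hsub : Finset.Icc k n ⊆ Finset.Icc 1 n :=
    Finset.Icc_subset_Icc_left (Finset.mem_Icc.1 hk).1
  refine eq_zero_of_hasDerivAt_smul
    (c := fun t => r k * (1 - 1 / r k - ∑ m ∈ Finset.Icc 1 n, (B m t + s m * P m t))
      - ∑ m ∈ Finset.Icc k n, P m t) ?_ (fun u hu => ?_) ht le_rfl hBt
  · refine (continuousOn_const.mul (continuousOn_const.sub
      (continuousOn_finsetSum _ fun m hm => ?_))).sub
      (continuousOn_finsetSum _ fun m hm => h.continuousOn_P (hsub hm))
    exact (h.continuousOn_B hm).add (continuousOn_const.mul (h.continuousOn_P hm))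
  · exact (h.1 k hk u hu).congr_deriv (by rw [smul_eq_mul]; ring)

theorem B_le_one (h : IsSolutionLV n r s B P) (hs : ∀ k ∈ Finset.Icc 1 n, 0 ≤ s k) {k : ℕ}
    (hk : k ∈ Finset.Icc 1 n) {t : ℝ} (ht : 0 ≤ t) : B k t ≤ 1 := by
  obtain ⟨hnonneg, hsum⟩ := h.2.2 t ht
  have hterm : ∀ m ∈ Finset.Icc 1 n, 0 ≤ B m t + s m * P m t := fun m hm =>
    add_nonneg (hnonneg m hm).1 (mul_nonneg (hs m hm) (hnonneg m hm).2)
  calc B k t ≤ B k t + s k * P k t :=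
        le_add_of_nonneg_right (mul_nonneg (hs k hk) (hnonneg k hk).2)
    _ ≤ ∑ m ∈ Finset.Icc 1 n, (B m t + s m * P m t) := Finset.single_le_sum hterm hk
    _ ≤ 1 := hsum

theorem hasDerivAt_lyapunov (h : IsSolutionLV n r s B P) {i j : ℕ}
    (hi : i ∈ Finset.Icc 1 n) (hj : j ∈ Finset.Icc 1 n) (hri : r i ≠ 0) (hrj : r j ≠ 0)
    {t : ℝ} (ht : 0 ≤ t) (hBi : 0 < B i t) (hBj : 0 < B j t)
    (hP : ∑ k ∈ Finset.Icc i n, P k t = ∑ k ∈ Finset.Icc j n, P k t) :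
    HasDerivAt (fun u => r j * log (B i u) - r i * log (B j u))
      ((r i - r j) * (1 + ∑ k ∈ Finset.Icc j n, P k t)) t := by
  have hlog_i := ((h.1 i hi t ht).log hBi.ne').const_mul (r j)
  have hlog_j := ((h.1 j hj t ht).log hBj.ne').const_mul (r i)
  refine (hlog_i.sub hlog_j).congr_deriv ?_
  rw [hP]
  field_simp
  ring

theorem tendsto_B_zero (h : IsSolutionLV n r s B P) (hs : ∀ k ∈ Finset.Icc 1 n, 0 ≤ s k)
    {i j : ℕ} (hi : i ∈ Finset.Icc 1 n) (hj : j ∈ Finset.Icc 1 n) (hrj : 0 < r j)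
    (hrij : r j < r i) (hBi : ∀ t, 0 ≤ t → 0 < B i t) (hBj : ∀ t, 0 ≤ t → 0 < B j t)
    (hP : ∀ t, 0 ≤ t → ∑ k ∈ Finset.Icc i n, P k t = ∑ k ∈ Finset.Icc j n, P k t) :
    Tendsto (B j) atTop (𝓝 0) := by
  set L : ℝ → ℝ := fun u => r j * log (B i u) - r i * log (B j u) with hL
  have hri : 0 < r i := hrj.trans hrij
  have hε : 0 < r i - r j := sub_pos.2 hrij
  have hL' : ∀ t ∈ Ici (0 : ℝ),
      HasDerivAt L ((r i - r j) * (1 + ∑ k ∈ Finset.Icc j n, P k t)) t := fun t ht =>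
    h.hasDerivAt_lyapunov hi hj hri.ne' hrj.ne' ht (hBi t ht) (hBj t ht) (hP t ht)
  have hgrowth : ∀ t, 0 ≤ t → L 0 + (r i - r j) * t ≤ L t := by
    intro t ht
    have hderiv_ge : ∀ x ∈ interior (Ici (0 : ℝ)), r i - r j ≤ deriv L x := by
      intro x hx
      rw [interior_Ici] at hx
      have hQ : 0 ≤ ∑ k ∈ Finset.Icc j n, P k x := Finset.sum_nonneg fun k hk =>
        ((h.2.2 x hx.le).1 k (Finset.Icc_subset_Icc_left (Finset.mem_Icc.1 hj).1 hk)).2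
      rw [(hL' x (Ioi_subset_Ici_self hx)).deriv]
      nlinarith
    have := (convex_Ici 0).mul_sub_le_image_sub_of_le_deriv (HasDerivAt.continuousOn hL')
      (fun x hx => (hL' x (interior_subset hx)).differentiableAt.differentiableWithinAt)
      hderiv_ge 0 self_mem_Ici t ht ht
    linarith
  have hlog : ∀ t, 0 ≤ t → log (B j t) ≤ -(L 0 + (r i - r j) * t) / r i := by
    intro t ht
    rw [le_div_iff₀ hri]
    have := mul_nonpos_of_nonneg_of_nonpos hrj.le
      (log_nonpos (hBi t ht).le (h.B_le_one hs hi ht))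
    have := hgrowth t ht
    simp only [hL] at this
    linarith
  have hbound : Tendsto (fun t => -(L 0 + (r i - r j) * t) / r i) atTop atBot :=
    (tendsto_neg_atTop_atBot.comp (tendsto_atTop_add_const_left _ _
      (tendsto_id.const_mul_atTop hε))).atBot_div_const hri
  have hlog_tendsto : Tendsto (fun t => log (B j t)) atTop atBot :=
    tendsto_atBot_mono' _ (eventually_ge_atTop 0 |>.mono hlog) hbound
  refine (tendsto_exp_atBot.comp hlog_tendsto).congr' ?_
  filter_upwards [eventually_ge_atTop 0] with t ht using exp_log (hBj t ht)

end IsSolutionLV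

theorem stmt9_general
    (n : ℕ) (r s : ℕ → ℝ)
    (hr : ∀ i, 1 ≤ i → i < n → r (i + 1) < r i) (hrn : 1 < r n)
    (hs1 : 0 < s 1) (hs : ∀ i, 1 ≤ i → i < n → s i < s (i + 1))
    (B P : ℕ → ℝ → ℝ) (hsol : IsSolutionLV n r s B P)
    (i j : ℕ) (h1i : 1 ≤ i) (hij : i < j) (hjn : j ≤ n)
    (hBi0 : 0 < B i 0) (hBj0 : 0 < B j 0)
    (hP0 : ∀ k, i ≤ k → k < j → P k 0 = 0) :
    Tendsto (B j) atTop (nhds 0) := by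
  have hi : i ∈ Finset.Icc 1 n := Finset.mem_Icc.2 ⟨h1i, by omega⟩
  have hj : j ∈ Finset.Icc 1 n := Finset.mem_Icc.2 ⟨by omega, hjn⟩
  have hr_anti : StrictAntiOn r (Icc 1 n) := strictAntiOn_Icc_of_add_one_lt hr
  have hrj : 0 < r j := one_pos.trans <| hrn.trans_le <|
    hr_anti.antitoneOn (Finset.mem_Icc.1 hj) ⟨by omega, le_rfl⟩ hjn
  have hs_nonneg : ∀ k ∈ Finset.Icc 1 n, 0 ≤ s k := fun k hk =>
    hs1.le.trans ((strictMonoOn_Icc_of_lt_add_one hs).monotoneOn ⟨le_rfl, by omega⟩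
      (Finset.mem_Icc.1 hk) (Finset.mem_Icc.1 hk).1)
  have hP : ∀ t, 0 ≤ t → ∑ k ∈ Finset.Icc i n, P k t = ∑ k ∈ Finset.Icc j n, P k t := by
    intro t ht
    refine (Finset.sum_subset (Finset.Icc_subset_Icc_left hij.le) fun k hk hkj => ?_).symm
    rw [Finset.mem_Icc] at hk hkj
    exact hsol.P_eq_zero (Finset.mem_Icc.2 ⟨by omega, hk.2⟩) (hP0 k hk.1 (by omega)) ht
  exact hsol.tendsto_B_zero hs_nonneg hi hj hrj
    (hr_anti (Finset.mem_Icc.1 hi) (Finset.mem_Icc.1 hj) hij)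
    (fun _ => hsol.B_pos hi hBi0) (fun _ => hsol.B_pos hj hBj0) hP

theorem stmt9
    (n : ℕ) (hn : 1 ≤ n) (r s : ℕ → ℝ)
    (hr : ∀ i, 1 ≤ i → i < n → r (i + 1) < r i) (hrn : 1 < r n)
    (hs1 : 0 < s 1) (hs : ∀ i, 1 ≤ i → i < n → s i < s (i + 1))
    (B P : ℕ → ℝ → ℝ) (hsol : IsSolutionLV n r s B P)
    (i j : ℕ) (h1i : 1 ≤ i) (hij : i < j) (hjn : j ≤ n)
    (hBi0 : 0 < B i 0) (hBj0 : 0 < B j 0)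
    (hP0 : ∀ k, i ≤ k → k < j → P k 0 = 0) :
    Tendsto (B j) atTop (nhds 0) :=
  stmt9_general n r s hr hrn hs1 hs B P hsol i j h1i hij hjn hBi0 hBj0 hP0
end

section
/- Let (B,P) be a solution of (LV) in Ω and let 1 ≤ i ≤ n. If limsup_{t→∞} Σ_{j=1}^i B_j(t) < s_i, then P_i(t) → 0 as t → ∞. -/
open Filter

/-!
On any time interval where `∑_{j ≤ i} B_j < b < s_i`, the equation for `P_i` gives
`P_i' ≤ -c P_i` with `c = (s_i - b) / s_i > 0`. Since the limsup hypothesis makes this hold for all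
large times, Grönwall's inequality bounds the nonnegative `P_i` by a decaying exponential.
-/

open Real Set Topology

theorem le_mul_exp_of_deriv_le_neg_mul {f f' : ℝ → ℝ} {c T : ℝ}
    (hf : ∀ t, T ≤ t → HasDerivAt f (f' t) t) (hbound : ∀ t, T ≤ t → f' t ≤ -c * f t)
    {t : ℝ} (ht : T ≤ t) : f t ≤ f T * exp (-c * (t - T)) := by
  have hcont : ContinuousOn f (Icc T t) := fun x hx => (hf x hx.1).continuousAt.continuousWithinAt
  have h := le_gronwallBound_of_liminf_deriv_right_le (K := -c) (ε := 0) hcont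
    (fun x hx _ hr => (hf x hx.1).hasDerivWithinAt.liminf_right_slope_le hr) le_rfl
    (fun x hx => by simpa using hbound x hx.1) t ⟨ht, le_rfl⟩
  rwa [gronwallBound_ε0] at h

theorem tendsto_zero_of_deriv_le_neg_mul {f f' : ℝ → ℝ} {c : ℝ} (hc : 0 < c)
    (hf : ∀ᶠ t in atTop, HasDerivAt f (f' t) t) (hbound : ∀ᶠ t in atTop, f' t ≤ -c * f t)
    (hnonneg : ∀ᶠ t in atTop, 0 ≤ f t) : Tendsto f atTop (𝓝 0) := by
  obtain ⟨T, hT⟩ := eventually_atTop.mp (hf.and hbound)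
  have hdecay : Tendsto (fun t => f T * exp (-c * (t - T))) atTop (𝓝 0) := by
    have : Tendsto (fun t => -c * (t - T)) atTop atBot :=
      (tendsto_atTop_add_const_right _ (-T) tendsto_id).const_mul_atTop_of_neg (neg_neg_of_pos hc)
    simpa using (tendsto_exp_atBot.comp this).const_mul (f T)
  refine tendsto_of_tendsto_of_tendsto_of_le_of_le' tendsto_const_nhds hdecay hnonneg ?_
  filter_upwards [eventually_ge_atTop T] with t ht
  exact le_mul_exp_of_deriv_le_neg_mul (fun t ht => (hT t ht).1) (fun t ht => (hT t ht).2) ht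

theorem pos_of_pos_of_lt_succ {n : ℕ} {s : ℕ → ℝ} (hs1 : 0 < s 1)
    (hs : ∀ i, 1 ≤ i → i < n → s i < s (i + 1)) {k : ℕ} (hk : k ∈ Finset.Icc 1 n) : 0 < s k := by
  obtain ⟨hk1, hkn⟩ := Finset.mem_Icc.mp hk
  clear hk
  induction k, hk1 using Nat.le_induction with
  | base => exact hs1
  | succ k hk1 ih => exact (ih (by omega)).trans (hs k hk1 hkn)

namespace IsSolutionLV

variable {n : ℕ} {r s : ℕ → ℝ} {B P : ℕ → ℝ → ℝ}

theorem hasDerivAt_P (hsol : IsSolutionLV n r s B P) {i : ℕ} (hi : i ∈ Finset.Icc 1 n) {t : ℝ}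
    (ht : 0 ≤ t) :
    HasDerivAt (P i) ((s i)⁻¹ * P i t * ((∑ j ∈ Finset.Icc 1 i, B j t) - s i)) t :=
  hsol.2.1 i hi t ht

theorem P_nonneg (hsol : IsSolutionLV n r s B P) {i : ℕ} (hi : i ∈ Finset.Icc 1 n) {t : ℝ}
    (ht : 0 ≤ t) : 0 ≤ P i t :=
  ((hsol.2.2 t ht).1 i hi).2

theorem sum_le_one (hsol : IsSolutionLV n r s B P) (hs : ∀ j ∈ Finset.Icc 1 n, 0 ≤ s j)
    {i : ℕ} (hin : i ≤ n) {t : ℝ} (ht : 0 ≤ t) : ∑ j ∈ Finset.Icc 1 i, B j t ≤ 1 := by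
  obtain ⟨hnonneg, hsum⟩ := hsol.2.2 t ht
  calc ∑ j ∈ Finset.Icc 1 i, B j t ≤ ∑ j ∈ Finset.Icc 1 n, B j t :=
        Finset.sum_le_sum_of_subset_of_nonneg (Finset.Icc_subset_Icc_right hin)
          fun j hj _ => (hnonneg j hj).1
    _ ≤ ∑ j ∈ Finset.Icc 1 n, (B j t + s j * P j t) :=
        Finset.sum_le_sum fun j hj => le_add_of_nonneg_right (mul_nonneg (hs j hj) (hnonneg j hj).2)
    _ ≤ 1 := hsum

end IsSolutionLV

theorem stmt13_general
    (n : ℕ) (r s : ℕ → ℝ)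
    (hs1 : 0 < s 1) (hs : ∀ i, 1 ≤ i → i < n → s i < s (i + 1))
    (B P : ℕ → ℝ → ℝ) (hsol : IsSolutionLV n r s B P)
    (i : ℕ) (h1i : 1 ≤ i) (hin : i ≤ n)
    (hlim : limsup (fun t => ∑ j ∈ Finset.Icc 1 i, B j t) atTop < s i) :
    Tendsto (P i) atTop (nhds 0) := by
  have hi : i ∈ Finset.Icc 1 n := Finset.mem_Icc.mpr ⟨h1i, hin⟩
  have hs_pos : ∀ j ∈ Finset.Icc 1 n, 0 < s j := fun j hj => pos_of_pos_of_lt_succ hs1 hs hj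
  -- `limsup` in `ℝ` carries no information unless the function is bounded above; `Ω` bounds it.
  have hbdd : IsBoundedUnder (· ≤ ·) atTop fun t => ∑ j ∈ Finset.Icc 1 i, B j t :=
    isBoundedUnder_of_eventually_le <| (eventually_ge_atTop 0).mono fun t ht =>
      hsol.sum_le_one (fun j hj => (hs_pos j hj).le) hin ht
  obtain ⟨b, hb_lim, hb_s⟩ := exists_between hlim
  refine tendsto_zero_of_deriv_le_neg_mul (div_pos (sub_pos.mpr hb_s) (hs_pos i hi))
    ((eventually_ge_atTop 0).mono fun _ ht => hsol.hasDerivAt_P hi ht) ?_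
    ((eventually_ge_atTop 0).mono fun _ ht => hsol.P_nonneg hi ht)
  filter_upwards [eventually_lt_of_limsup_lt hb_lim hbdd, eventually_ge_atTop 0] with t hb ht
  have hrate : (s i)⁻¹ * (∑ j ∈ Finset.Icc 1 i, B j t - s i) ≤ -((s i - b) / s i) := by
    rw [neg_div', div_eq_inv_mul]
    exact mul_le_mul_of_nonneg_left (by linarith) (inv_nonneg.mpr (hs_pos i hi).le)
  have := mul_le_mul_of_nonneg_right hrate (hsol.P_nonneg hi ht)
  linarith

theorem stmt13
    (n : ℕ) (hn : 1 ≤ n) (r s : ℕ → ℝ)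
    (hr : ∀ i, 1 ≤ i → i < n → r (i + 1) < r i) (hrn : 1 < r n)
    (hs1 : 0 < s 1) (hs : ∀ i, 1 ≤ i → i < n → s i < s (i + 1))
    (B P : ℕ → ℝ → ℝ) (hsol : IsSolutionLV n r s B P)
    (i : ℕ) (h1i : 1 ≤ i) (hin : i ≤ n)
    (hlim : limsup (fun t => ∑ j ∈ Finset.Icc 1 i, B j t) atTop < s i) :
    Tendsto (P i) atTop (nhds 0) :=
  stmt13_general n r s hs1 hs B P hsol i h1i hin hlim
end
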